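/- The element R makes 𝒩 into a quasitriangular Hopf algebra: R is invertible in 𝒩⊗𝒩 and satisfies (i) R·Δ(x) = Δᵒᵖ(x)·R for all x ∈ 𝒩, where Δᵒᵖ is the coproduct composed with the flip of tensor factors; (ii) (Δ⊗id)(R) = R₁₃·R₂₃ in 𝒩⊗𝒩⊗𝒩; (iii) (id⊗Δ)(R) = R₁₃·R₁₂ in 𝒩⊗𝒩⊗𝒩 (with R₁₂, R₁₃, R₂₃ the standard embeddings of R into the three pairs of tensor factors). -/

import Mathlib

set_option synthInstance.maxHeartbeats 1000000
set_option maxHeartbeats 1000000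

noncomputable section

open TensorProduct

/-- The quadratic form `q(x₀,x₁,x₂) = x₀²` on `ℝ³`. -/
def Nform : QuadraticForm ℝ (Fin 3 → ℝ) :=
  QuadraticMap.weightedSumSquares ℝ (fun i : Fin 3 => if i = 0 then (1 : ℝ) else 0)

/-- The algebra `𝒩 = ℤ/2 ⋉ Λ*ℝ²`, realized as the Clifford algebra of `Nform`. -/
abbrev NA := CliffordAlgebra Nform

/-- The generator `K`. -/
def K : NA := CliffordAlgebra.ι Nform (Pi.single 0 1)

/-- The generator `θ`. -/
def θ : NA := CliffordAlgebra.ι Nform (Pi.single 1 1)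

/-- The generator `θ̄`. -/
def θb : NA := CliffordAlgebra.ι Nform (Pi.single 2 1)

/-- `ρ := θ̄θ`. -/
def ρ : NA := θb * θ

/-- `Z := (1/2)·Σ_{i,j∈{0,1}} (−1)^{ij} K^i ⊗ K^j`. -/
def Z : NA ⊗[ℝ] NA :=
  (1 / 2 : ℝ) • ∑ i : Fin 2, ∑ j : Fin 2,
    ((-1 : ℝ)) ^ ((i : ℕ) * (j : ℕ)) • ((K ^ (i : ℕ)) ⊗ₜ[ℝ] (K ^ (j : ℕ)))

/-- The R-matrix `R := (1⊗1 + θ⊗Kθ̄)·Z`. -/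
def Rmat : NA ⊗[ℝ] NA := ((1 : NA ⊗[ℝ] NA) + θ ⊗ₜ[ℝ] (K * θb)) * Z

/-- The embedding of `𝒩⊗𝒩` into the first two factors of `𝒩⊗(𝒩⊗𝒩)`. -/
def ι₁₂ : NA ⊗[ℝ] NA →ₐ[ℝ] NA ⊗[ℝ] (NA ⊗[ℝ] NA) :=
  Algebra.TensorProduct.map (AlgHom.id ℝ NA) Algebra.TensorProduct.includeLeft

/-- The embedding of `𝒩⊗𝒩` into the outer two factors of `𝒩⊗(𝒩⊗𝒩)`. -/
def ι₁₃ : NA ⊗[ℝ] NA →ₐ[ℝ] NA ⊗[ℝ] (NA ⊗[ℝ] NA) :=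
  Algebra.TensorProduct.map (AlgHom.id ℝ NA) Algebra.TensorProduct.includeRight

/-- The embedding of `𝒩⊗𝒩` into the last two factors of `𝒩⊗(𝒩⊗𝒩)`. -/
def ι₂₃ : NA ⊗[ℝ] NA →ₐ[ℝ] NA ⊗[ℝ] (NA ⊗[ℝ] NA) :=
  Algebra.TensorProduct.includeRight


section Aux

lemma Nform_apply (v : Fin 3 → ℝ) : Nform v = v 0 ^ 2 := by
  simp [Nform, QuadraticMap.weightedSumSquares_apply, Fin.sum_univ_three, sq]

lemma polar_eq (a b : Fin 3 → ℝ) : QuadraticMap.polar Nform a b = 2 * a 0 * b 0 := by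
  simp [QuadraticMap.polar, Nform_apply]; ring

lemma anticomm (i j : Fin 3) (h : ¬(i = 0 ∧ j = 0)) :
    CliffordAlgebra.ι Nform (Pi.single i 1) * CliffordAlgebra.ι Nform (Pi.single j 1)
      = -(CliffordAlgebra.ι Nform (Pi.single j 1) * CliffordAlgebra.ι Nform (Pi.single i 1)) := by
  have := CliffordAlgebra.ι_mul_ι_add_swap (Q := Nform) (Pi.single j 1) (Pi.single i 1)
  rw [polar_eq] at this
  rcases (not_and_or.mp h) with h' | h' <;>
    · simp [Pi.single_apply, h'] at this
      rw [add_comm] at this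
      exact eq_neg_of_add_eq_zero_left this

lemma hKK : K * K = 1 := by
  rw [K, CliffordAlgebra.ι_sq_scalar, Nform_apply]; simp
lemma hKK' (x : NA) : K * (K * x) = x := by rw [← mul_assoc, hKK, one_mul]
lemma hθθ : θ * θ = 0 := by
  rw [θ, CliffordAlgebra.ι_sq_scalar, Nform_apply]; simp
lemma hθθ' (x : NA) : θ * (θ * x) = 0 := by rw [← mul_assoc, hθθ, zero_mul]
lemma hbb : θb * θb = 0 := by
  rw [θb, CliffordAlgebra.ι_sq_scalar, Nform_apply]; simp
lemma hbb' (x : NA) : θb * (θb * x) = 0 := by rw [← mul_assoc, hbb, zero_mul]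
lemma hθK : θ * K = -(K * θ) := anticomm 1 0 (by simp)
lemma hθK' (x : NA) : θ * (K * x) = -(K * (θ * x)) := by
  rw [← mul_assoc, hθK, ← mul_assoc]; simp
lemma hbK : θb * K = -(K * θb) := anticomm 2 0 (by simp)
lemma hbK' (x : NA) : θb * (K * x) = -(K * (θb * x)) := by
  rw [← mul_assoc, hbK, ← mul_assoc]; simp
lemma hθb : θ * θb = -(θb * θ) := anticomm 1 2 (by simp)
lemma hθb' (x : NA) : θ * (θb * x) = -(θb * (θ * x)) := by
  rw [← mul_assoc, hθb, ← mul_assoc]; simp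

lemma Zexp : Z = (1/2 : ℝ) • ((1:NA) ⊗ₜ[ℝ] (1:NA) + K ⊗ₜ[ℝ] 1 + 1 ⊗ₜ[ℝ] K - K ⊗ₜ[ℝ] K) := by
  rw [Z, Fin.sum_univ_two]
  simp [Fin.sum_univ_two]
  module

lemma Rexp : Rmat = (1/2 : ℝ) •
    ((1:NA) ⊗ₜ[ℝ] (1:NA) + K ⊗ₜ[ℝ] 1 + 1 ⊗ₜ[ℝ] K - K ⊗ₜ[ℝ] K
      + θ ⊗ₜ[ℝ] (K * θb) - (K * θ) ⊗ₜ[ℝ] (K * θb) - θ ⊗ₜ[ℝ] θb - (K * θ) ⊗ₜ[ℝ] θb) := by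
  rw [Rmat, Zexp]
  simp only [mul_smul_comm, mul_add, mul_sub, add_mul, one_mul,
    Algebra.TensorProduct.tmul_mul_tmul, mul_one, hKK, hθK, hθK', hbK, hbK', hθb, hθb',
    hθθ, hθθ', hbb, hbb', hKK', neg_tmul, tmul_neg, mul_neg, neg_neg, mul_zero, zero_mul,
    mul_assoc]
  module

lemma rawK : Rmat * (K ⊗ₜ[ℝ] K) = (K ⊗ₜ[ℝ] K) * Rmat := by
  rw [Rexp]
  simp only [mul_smul_comm, smul_mul_assoc, mul_add, mul_sub, add_mul, sub_mul, one_mul,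
    Algebra.TensorProduct.tmul_mul_tmul, mul_one, hKK, hθK, hθK', hbK, hbK', hθb, hθb',
    hθθ, hθθ', hbb, hbb', hKK', neg_tmul, tmul_neg, mul_neg, neg_neg, mul_zero, zero_mul,
    neg_mul, mul_assoc, tmul_zero, zero_tmul] <;>
  module

lemma rawθ : Rmat * (θ ⊗ₜ[ℝ] 1 + K ⊗ₜ[ℝ] θ) = ((1:NA) ⊗ₜ[ℝ] θ + θ ⊗ₜ[ℝ] K) * Rmat := by
  rw [Rexp]
  simp only [mul_smul_comm, smul_mul_assoc, mul_add, mul_sub, add_mul, sub_mul, one_mul,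
    Algebra.TensorProduct.tmul_mul_tmul, mul_one, hKK, hθK, hθK', hbK, hbK', hθb, hθb',
    hθθ, hθθ', hbb, hbb', hKK', neg_tmul, tmul_neg, mul_neg, neg_neg, mul_zero, zero_mul,
    neg_mul, mul_assoc, tmul_zero, zero_tmul] <;>
  module

lemma rawθb : Rmat * (θb ⊗ₜ[ℝ] 1 + K ⊗ₜ[ℝ] θb) = ((1:NA) ⊗ₜ[ℝ] θb + θb ⊗ₜ[ℝ] K) * Rmat := by
  rw [Rexp]
  simp only [mul_smul_comm, smul_mul_assoc, mul_add, mul_sub, add_mul, sub_mul, one_mul,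
    Algebra.TensorProduct.tmul_mul_tmul, mul_one, hKK, hθK, hθK', hbK, hbK', hθb, hθb',
    hθθ, hθθ', hbb, hbb', hKK', neg_tmul, tmul_neg, mul_neg, neg_neg, mul_zero, zero_mul,
    neg_mul, mul_assoc, tmul_zero, zero_tmul] <;>
  module

/-- The inverse of `Rmat`. -/
def Rinv : NA ⊗[ℝ] NA := Z * ((1 : NA ⊗[ℝ] NA) - θ ⊗ₜ[ℝ] (K * θb))

lemma RRinv : Rmat * Rinv = 1 := by
  rw [Rexp, Rinv, Zexp, Algebra.TensorProduct.one_def]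
  simp only [mul_smul_comm, smul_mul_assoc, mul_add, mul_sub, add_mul, sub_mul, one_mul,
    Algebra.TensorProduct.tmul_mul_tmul, mul_one, hKK, hθK, hθK', hbK, hbK', hθb, hθb',
    hθθ, hθθ', hbb, hbb', hKK', neg_tmul, tmul_neg, mul_neg, neg_neg, mul_zero, zero_mul,
    neg_mul, mul_assoc, tmul_zero, zero_tmul] <;>
  module

lemma RinvR : Rinv * Rmat = 1 := by
  rw [Rexp, Rinv, Zexp, Algebra.TensorProduct.one_def]
  simp only [mul_smul_comm, smul_mul_assoc, mul_add, mul_sub, add_mul, sub_mul, one_mul,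
    Algebra.TensorProduct.tmul_mul_tmul, mul_one, hKK, hθK, hθK', hbK, hbK', hθb, hθb',
    hθθ, hθθ', hbb, hbb', hKK', neg_tmul, tmul_neg, mul_neg, neg_neg, mul_zero, zero_mul,
    neg_mul, mul_assoc, tmul_zero, zero_tmul] <;>
  module

lemma iota_expand (v : Fin 3 → ℝ) :
    CliffordAlgebra.ι Nform v = v 0 • K + v 1 • θ + v 2 • θb := by
  have hv : v = v 0 • (Pi.single 0 1 : Fin 3 → ℝ) + v 1 • (Pi.single 1 1 : Fin 3 → ℝ) + v 2 • (Pi.single 2 1 : Fin 3 → ℝ) := by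
    funext j; fin_cases j <;> simp [Pi.single_apply]
  rw [hv]
  simp [K, θ, θb]

end Aux

/-- the element `R` makes `𝒩` into a quasitriangular Hopf algebra: `R` is
invertible in `𝒩⊗𝒩` and satisfies (i) `R·Δ(x) = Δᵒᵖ(x)·R` for all `x`, where `Δᵒᵖ` is
the coproduct composed with the flip of tensor factors; (ii) `(Δ⊗id)(R) = R₁₃·R₂₃`;
(iii) `(id⊗Δ)(R) = R₁₃·R₁₂`. -/
theorem stmt5
    (Δ : NA →ₐ[ℝ] NA ⊗[ℝ] NA)
    (hΔK : Δ K = K ⊗ₜ[ℝ] K)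
    (hΔθ : Δ θ = θ ⊗ₜ[ℝ] 1 + K ⊗ₜ[ℝ] θ)
    (hΔθb : Δ θb = θb ⊗ₜ[ℝ] 1 + K ⊗ₜ[ℝ] θb) :
    IsUnit Rmat ∧
    (∀ x : NA,
      Rmat * Δ x = (Algebra.TensorProduct.comm ℝ NA NA) (Δ x) * Rmat) ∧
    ((Algebra.TensorProduct.assoc (R := ℝ) (S := ℝ) (T := ℝ) (A := NA) (C := NA) (D := NA))
        ((Algebra.TensorProduct.map Δ (AlgHom.id ℝ NA)) Rmat)
      = ι₁₃ Rmat * ι₂₃ Rmat) ∧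
    ((Algebra.TensorProduct.map (AlgHom.id ℝ NA) Δ) Rmat
      = ι₁₃ Rmat * ι₁₂ Rmat) := by
  refine ⟨⟨⟨Rmat, Rinv, RRinv, RinvR⟩, rfl⟩, ?_, ?_, ?_⟩
  · -- part (i)
    have gK : Rmat * Δ K = (Algebra.TensorProduct.comm ℝ NA NA) (Δ K) * Rmat := by
      rw [hΔK]
      simpa [Algebra.TensorProduct.comm_tmul] using rawK
    have gθ : Rmat * Δ θ = (Algebra.TensorProduct.comm ℝ NA NA) (Δ θ) * Rmat := by
      rw [hΔθ]
      simpa [Algebra.TensorProduct.comm_tmul] using rawθ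
    have gθb : Rmat * Δ θb = (Algebra.TensorProduct.comm ℝ NA NA) (Δ θb) * Rmat := by
      rw [hΔθb]
      simpa [Algebra.TensorProduct.comm_tmul] using rawθb
    intro x
    induction x using CliffordAlgebra.induction with
    | algebraMap r =>
      rw [AlgHom.commutes, AlgEquiv.commutes]
      exact (Algebra.commutes r Rmat).symm
    | ι v =>
      rw [iota_expand v]
      simp only [map_add, map_smul, mul_add, add_mul, mul_smul_comm, smul_mul_assoc,
        gK, gθ, gθb]
    | mul a b ha hb =>
      rw [map_mul, map_mul, ← mul_assoc, ha, mul_assoc, hb, ← mul_assoc]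
    | add a b ha hb =>
      rw [map_add, map_add, mul_add, add_mul, ha, hb]
  · -- part (ii)
    rw [Rexp]
    simp only [ι₁₂, ι₁₃, ι₂₃, map_smul, map_add, map_sub, Algebra.TensorProduct.map_tmul,
      Algebra.TensorProduct.includeLeft_apply, Algebra.TensorProduct.includeRight_apply,
      AlgHom.coe_id, id_eq, map_mul, map_one, hΔK, hΔθ, hΔθb,
      Algebra.TensorProduct.tmul_mul_tmul, add_tmul, sub_tmul, smul_tmul', tmul_add,
      tmul_sub, tmul_smul, Algebra.TensorProduct.assoc_tmul, Algebra.TensorProduct.one_def,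
      neg_zero, sub_zero, add_zero, zero_add,
      mul_smul_comm, smul_mul_assoc, mul_add, mul_sub, add_mul, sub_mul, one_mul, mul_one,
      hKK, hθK, hθK', hbK, hbK', hθb, hθb', hθθ, hθθ', hbb, hbb', hKK',
      neg_tmul, tmul_neg, mul_neg, neg_neg, mul_zero, zero_mul, neg_mul, mul_assoc,
      tmul_zero, zero_tmul, smul_smul] <;>
    module
  · -- part (iii)
    rw [Rexp]
    simp only [ι₁₂, ι₁₃, ι₂₃, map_smul, map_add, map_sub, Algebra.TensorProduct.map_tmul,
      Algebra.TensorProduct.includeLeft_apply, Algebra.TensorProduct.includeRight_apply,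
      AlgHom.coe_id, id_eq, map_mul, map_one, hΔK, hΔθ, hΔθb,
      Algebra.TensorProduct.tmul_mul_tmul, add_tmul, sub_tmul, smul_tmul', tmul_add,
      tmul_sub, tmul_smul, Algebra.TensorProduct.one_def,
      neg_zero, sub_zero, add_zero, zero_add,
      mul_smul_comm, smul_mul_assoc, mul_add, mul_sub, add_mul, sub_mul, one_mul, mul_one,
      hKK, hθK, hθK', hbK, hbK', hθb, hθb', hθθ, hθθ', hbb, hbb', hKK',
      neg_tmul, tmul_neg, mul_neg, neg_neg, mul_zero, zero_mul, neg_mul, mul_assoc,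
      tmul_zero, zero_tmul, smul_smul] <;>
    module
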